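/- Let w be a word of length n over a finite ordered alphabet Σ, let c be the number of cycles of its standard permutation σ_w, let σ_i be the standard permutation of dol(w,i), and let sgn denote the sign of a permutation. Then for every 1 ≤ i ≤ n+1, sgn(σ_i) = (−1)^{n−c+i−1}. -/

import Mathlib

/-
The standard permutation of `dol w (k + 1)` is `τ ∘ (0 1 … k)`, where `τ` fixes `0` and acts as
`σ_w` on `1, …, n`: `$` is the smallest letter, so it has rank `0`, and the cycle `(0 1 … k)`
moves it from the front to position `k` without changing the order of the other positions.
The factor `τ` has the sign of `σ_w`, which is `(-1)^(n - c)` because a permutation of `n`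
points with `c` cycles (fixed points included) is a product of `n - c` transpositions; the
cycle of length `k + 1` contributes `(-1)^k`.
-/

namespace DollarBWT

/-- The list of all rotations of a word. -/
def rotations {α : Type*} (v : List α) : List (List α) :=
  (List.range v.length).map fun k => v.rotate k

/-- The Burrows–Wheeler transform of a word `v`: sort (stably) the multiset of all
rotations of `v` lexicographically and take the last character of each rotation. -/
def bwt {α : Type*} [LinearOrder α] (v : List α) : List α :=
  ((rotations v).insertionSort (· ≤ ·)).filterMap List.getLast?

/-- `dol w i` inserts the sentinel `⊥` (playing the role of `$`, smaller than every
letter of the alphabet) at (1-based) position `i` of the word `w`. -/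
def dol {α : Type*} [LinearOrder α] (w : List α) (i : ℕ) : List (WithBot α) :=
  (w.map (fun a => (a : WithBot α))).insertIdx (i - 1) ⊥

/-- Position `i` (1-based, `1 ≤ i ≤ |w|+1`) is *nice* for `w` if there is a word `v`
of the same length as `w` with `BWT(v$) = dol(w,i)`. -/
def Nice {α : Type*} [LinearOrder α] (w : List α) (i : ℕ) : Prop :=
  ∃ v : List α, v.length = w.length ∧
    bwt (v.map (fun a => (a : WithBot α)) ++ [(⊥ : WithBot α)]) = dol w i

/-- `σ` (a permutation of `Fin n`, thought of as the positions `1,…,n` of `w`) is the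
standard permutation of the word `w`. -/
def IsStdPerm {α : Type*} [LinearOrder α] {n : ℕ} (w : List α)
    (σ : Equiv.Perm (Fin n)) : Prop :=
  ∃ h : w.length = n, ∀ i j : Fin n,
    σ i < σ j ↔ (w.get (Fin.cast h.symm i) < w.get (Fin.cast h.symm j)
      ∨ (w.get (Fin.cast h.symm i) = w.get (Fin.cast h.symm j) ∧ i < j))

/-- Application of a permutation of `Fin n` in 1-based terms: `ap σ k` is the image of
`k ∈ {1,…,n}` under `σ` read as a permutation of `{1,…,n}` (junk: `k` outside). -/
def ap {n : ℕ} (σ : Equiv.Perm (Fin n)) (k : ℕ) : ℕ :=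
  if h : 1 ≤ k ∧ k ≤ n then ((σ ⟨k - 1, by omega⟩ : Fin n) : ℕ) + 1 else k

/-- `C` is a cycle of the permutation `σ`: a minimal non-empty subset with `σ(C) = C`. -/
def IsCycleOf {β : Type*} (σ : Equiv.Perm β) (C : Set β) : Prop :=
  C.Nonempty ∧ σ '' C = C ∧ ∀ D : Set β, D.Nonempty → D ⊆ C → σ '' D = D → D = C

/-- The number of cycles in the cycle decomposition of `σ` (fixpoints count as cycles). -/
noncomputable def numCycles {β : Type*} (σ : Equiv.Perm β) : ℕ :=
  {C : Set β | IsCycleOf σ C}.ncard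

/-- A permutation is cyclic if its cycle decomposition consists of a single cycle,
i.e. the whole domain is one cycle. -/
def PermCyclic {β : Type*} (σ : Equiv.Perm β) : Prop :=
  IsCycleOf σ (Set.univ : Set β)

/-- `C ⊆ {1,…,n}` (in 1-based terms) is a cycle of `σ`. -/
def IsCycleSet1 {n : ℕ} (σ : Equiv.Perm (Fin n)) (C : Set ℕ) : Prop :=
  ∃ C' : Set (Fin n), IsCycleOf σ C' ∧ C = (fun x : Fin n => (x : ℕ) + 1) '' C'

/-- A word is primitive if it is not a proper power. -/
def Primitive {α : Type*} (v : List α) : Prop :=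
  ∀ (u : List α) (k : ℕ), v = (List.replicate k u).flatten → k = 1

/-- `σ` equals the product of the cycles given (in 1-based terms) by the lists in `Ls`:
the lists are disjoint, consist of elements of `{1,…,n}`, `σ` maps each entry of each
list to the (cyclically) next one, and fixes everything else. -/
def IsCyclesProd {n : ℕ} (σ : Equiv.Perm (Fin n)) (Ls : List (List ℕ)) : Prop :=
  Ls.flatten.Nodup ∧ (∀ L ∈ Ls, L ≠ []) ∧ (∀ x ∈ Ls.flatten, 1 ≤ x ∧ x ≤ n) ∧
  (∀ L ∈ Ls, ∀ (t : ℕ) (ht : t < L.length),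
      ap σ (L.get ⟨t, ht⟩) = L.get ⟨(t + 1) % L.length, Nat.mod_lt _ (by omega)⟩) ∧
  (∀ x : ℕ, 1 ≤ x → x ≤ n → x ∉ Ls.flatten → ap σ x = x)

/-- `S ⊆ {1,…,n}` (1-based) is a pseudo-cycle of `σ` witnessed by the partition
`S = Sl ∪ Sr` with `Sl < Sr` and `σ(S) = (Sl − 1) ∪ Sr`. -/
def IsPseudoCycleWith {n : ℕ} (σ : Equiv.Perm (Fin n)) (S Sl Sr : Set ℕ) : Prop :=
  S.Nonempty ∧ S ⊆ Set.Icc 1 n ∧ Sl ∪ Sr = S ∧ Disjoint Sl Sr ∧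
    (∀ x ∈ Sl, ∀ y ∈ Sr, x < y) ∧
    ap σ '' S = ((fun x => x - 1) '' Sl) ∪ Sr

/-- The critical interval `[a+1, b]` of a pseudo-cycle with partition `Sl, Sr`,
where `a = max Sl` (`0` if `Sl = ∅`) and `b = min Sr` (`n+1` if `Sr = ∅`). -/
noncomputable def criticalInterval (n : ℕ) (Sl Sr : Set ℕ) : Set ℕ :=
  Set.Icc (sSup Sl + 1) (sInf (insert (n + 1) Sr))

/-- `unshift(U, i) = { x ∈ U : x < i } ∪ { x − 1 : x ∈ U, x > i }`. -/
def unshift (U : Set ℕ) (i : ℕ) : Set ℕ :=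
  {x | x ∈ U ∧ x < i} ∪ (fun x => x - 1) '' {x | x ∈ U ∧ i < x}

/-- The number of nice positions of `w`. -/
noncomputable def niceCount {α : Type*} [LinearOrder α] (w : List α) : ℕ :=
  {i : ℕ | 1 ≤ i ∧ i ≤ w.length + 1 ∧ Nice w i}.ncard

/-- `L`, the maximum over all cycles `C` of `σ` of the (1-based) minimum of `C`. -/
noncomputable def Lval {n : ℕ} (σ : Equiv.Perm (Fin n)) : ℕ :=
  sSup ((fun C : Set (Fin n) => sInf ((fun x : Fin n => (x : ℕ) + 1) '' C)) ''
    {C | IsCycleOf σ C})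

/-- The number of bad pairs of `σ`: cycles `C` which are not the cycle with the largest
minimum and such that `min C + 1 ∈ C` (all in 1-based terms). -/
noncomputable def badPairCount {n : ℕ} (σ : Equiv.Perm (Fin n)) : ℕ :=
  {C : Set (Fin n) | IsCycleOf σ C ∧
    sInf ((fun x : Fin n => (x : ℕ) + 1) '' C) < Lval σ ∧
    sInf ((fun x : Fin n => (x : ℕ) + 1) '' C) + 1 ∈
      (fun x : Fin n => (x : ℕ) + 1) '' C}.ncard

section Cycles

variable {β : Type*} {σ : Equiv.Perm β}

lemma mem_of_sameCycle_of_image_eq [Finite β] {D : Set β} (hD : σ '' D = D) {x y : β}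
    (hx : x ∈ D) (hxy : σ.SameCycle x y) : y ∈ D := by
  obtain ⟨k, -, rfl⟩ := hxy.exists_pow_eq'
  have hDk : (σ ^ k) '' D = D := by
    rw [Equiv.Perm.coe_pow, Set.image_iterate_eq, Function.iterate_fixed hD]
  exact hDk ▸ Set.mem_image_of_mem _ hx

lemma image_setOf_sameCycle (σ : Equiv.Perm β) (x : β) :
    σ '' {y | σ.SameCycle x y} = {y | σ.SameCycle x y} := by
  ext z
  constructor
  · rintro ⟨y, hy, rfl⟩
    exact Equiv.Perm.sameCycle_apply_right.2 hy
  · intro hz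
    exact ⟨σ⁻¹ z, Equiv.Perm.sameCycle_apply_right.1 (by simpa using hz),
      by simp⟩

lemma isCycleOf_iff_exists_eq_setOf_sameCycle [Finite β] {C : Set β} :
    IsCycleOf σ C ↔ ∃ x, C = {y | σ.SameCycle x y} := by
  constructor
  · rintro ⟨⟨x, hx⟩, hC, hmin⟩
    refine ⟨x, (hmin _ ⟨x, Equiv.Perm.SameCycle.refl σ x⟩ ?_ (image_setOf_sameCycle σ x)).symm⟩
    exact fun y hxy => mem_of_sameCycle_of_image_eq hC hx hxy
  · rintro ⟨x, rfl⟩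
    refine ⟨⟨x, Equiv.Perm.SameCycle.refl σ x⟩, image_setOf_sameCycle σ x, ?_⟩
    rintro D ⟨y, hy⟩ hDC hD
    refine (hDC.antisymm fun z hxz => ?_)
    exact mem_of_sameCycle_of_image_eq hD hy ((hDC hy : σ.SameCycle x y).symm.trans hxz)

lemma setOf_sameCycle_of_apply_eq {x : β} (hx : σ x = x) :
    {y | σ.SameCycle x y} = {x} := by
  ext y
  exact ⟨fun hxy => (hxy.eq_of_left hx).symm, fun hy => hy ▸ Equiv.Perm.SameCycle.refl σ x⟩

variable [Fintype β] [DecidableEq β]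

lemma setOf_sameCycle_of_mem_support {x : β} (hx : x ∈ σ.support) :
    {y | σ.SameCycle x y} = ((σ.cycleOf x).support : Set β) := by
  ext y
  simp only [Set.mem_ofPred_eq, Finset.mem_coe, Equiv.Perm.mem_support_cycleOf_iff, hx, and_true]

lemma setOf_isCycleOf_eq :
    {C | IsCycleOf σ C} = (fun x => ({x} : Set β)) '' {x | σ x = x} ∪
      (fun g : Equiv.Perm β => (g.support : Set β)) '' σ.cycleFactorsFinset := by
  ext C
  rw [Set.mem_ofPred_eq, isCycleOf_iff_exists_eq_setOf_sameCycle]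
  constructor
  · rintro ⟨x, rfl⟩
    by_cases hx : σ x = x
    · exact Or.inl ⟨x, hx, (setOf_sameCycle_of_apply_eq hx).symm⟩
    · have hx' := Equiv.Perm.mem_support.2 hx
      exact Or.inr ⟨σ.cycleOf x, Equiv.Perm.cycleOf_mem_cycleFactorsFinset_iff.2 hx',
        (setOf_sameCycle_of_mem_support hx').symm⟩
  · rintro (⟨x, hx, rfl⟩ | ⟨g, hg, rfl⟩)
    · exact ⟨x, (setOf_sameCycle_of_apply_eq hx).symm⟩
    · obtain ⟨x, hx⟩ := (Equiv.Perm.mem_cycleFactorsFinset_iff.1 hg).1.nonempty_support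
      rw [Equiv.Perm.cycle_is_cycleOf hx hg]
      exact ⟨x, (setOf_sameCycle_of_mem_support
        (Equiv.Perm.mem_cycleFactorsFinset_support_le hg hx)).symm⟩

lemma numCycles_eq_card_sub_card_support_add_card_cycleFactorsFinset :
    numCycles σ = Fintype.card β - σ.support.card + σ.cycleFactorsFinset.card := by
  have hdisj : Disjoint ((fun x => ({x} : Set β)) '' {x | σ x = x})
      ((fun g : Equiv.Perm β => (g.support : Set β)) '' σ.cycleFactorsFinset) := by
    rw [Set.disjoint_left]
    rintro _ ⟨x, -, rfl⟩ ⟨g, hg, hgx⟩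
    have h2 := (Equiv.Perm.mem_cycleFactorsFinset_iff.1 hg).1.two_le_card_support
    simp [Finset.coe_eq_singleton.1 hgx] at h2
  have hfix : ((fun x => ({x} : Set β)) '' {x | σ x = x}).ncard =
      Fintype.card β - σ.support.card := by
    rw [Set.ncard_image_of_injective _ Set.singleton_injective, ← Finset.card_compl,
      ← Set.ncard_coe_finset]
    congr
    ext
    simp
  have hcyc : ((fun g : Equiv.Perm β => (g.support : Set β)) '' σ.cycleFactorsFinset).ncard =
      σ.cycleFactorsFinset.card := by
    rw [Set.InjOn.ncard_image, Set.ncard_coe_finset]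
    intro g hg g' hg' hgg'
    obtain ⟨x, hx⟩ := (Equiv.Perm.mem_cycleFactorsFinset_iff.1 hg).1.nonempty_support
    have hx' : x ∈ g'.support := Finset.coe_inj.1 hgg' ▸ hx
    rw [Equiv.Perm.cycle_is_cycleOf hx hg, Equiv.Perm.cycle_is_cycleOf hx' hg']
  rw [numCycles, setOf_isCycleOf_eq, Set.ncard_union_eq hdisj, hfix, hcyc]

lemma sign_eq_neg_one_pow_card_sub_numCycles :
    Equiv.Perm.sign σ = (-1) ^ (Fintype.card β - numCycles σ) := by
  have hsum := σ.sum_cycleType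
  have hcard : Multiset.card σ.cycleType ≤ σ.cycleType.sum := by
    simpa using Multiset.card_nsmul_le_sum (a := 1) fun _ h =>
      (Equiv.Perm.two_le_of_mem_cycleType h).trans' one_le_two
  have hsupp : σ.support.card ≤ Fintype.card β := σ.support.card_le_univ
  have hexp : σ.cycleType.sum + Multiset.card σ.cycleType =
      (Fintype.card β - numCycles σ) + 2 * Multiset.card σ.cycleType := by
    have hfactors : Multiset.card σ.cycleType = σ.cycleFactorsFinset.card := by
      simp [Equiv.Perm.cycleType_def]
    rw [numCycles_eq_card_sub_card_support_add_card_cycleFactorsFinset]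
    omega
  rw [Equiv.Perm.sign_of_cycleType, hexp, pow_add, pow_mul, Int.units_sq, one_pow, mul_one]

end Cycles

lemma IsStdPerm.eq {α : Type*} [LinearOrder α] {n : ℕ} {w : List α} {σ τ : Equiv.Perm (Fin n)}
    (hσ : IsStdPerm w σ) (hτ : IsStdPerm w τ) : σ = τ := by
  obtain ⟨_, hσ⟩ := hσ
  obtain ⟨_, hτ⟩ := hτ
  have hmono : StrictMono (τ ∘ σ.symm) := fun a b hab => by
    have hab' : σ (σ.symm a) < σ (σ.symm b) := by simpa using hab
    exact (hτ _ _).2 ((hσ _ _).1 hab')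
  ext x : 1
  simpa using (hmono.apply_eq (x := σ x)).symm

section Dol

variable {α : Type*} [LinearOrder α]

/-- The coercion `(a : WithBot α)` in `dol` lifts `w` through the list monad, so `dol` does not
unfold to a `List.map`. -/
lemma dol_eq_insertIdx (w : List α) (i : ℕ) :
    dol w i = (w.map WithBot.some).insertIdx (i - 1) ⊥ := by
  simp [dol, ← List.map_eq_flatMap, Function.comp_def]

lemma length_dol (w : List α) {i : ℕ} (hi : i ≤ w.length + 1) :
    (dol w i).length = w.length + 1 := by
  rw [dol_eq_insertIdx, List.length_insertIdx_of_le_length (by simp; omega), List.length_map]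

lemma getElem_dol_self (w : List α) (k : Fin (w.length + 1)) :
    (dol w (k + 1))[(k : ℕ)]'(by rw [length_dol w (by omega)]; exact k.isLt) = ⊥ := by
  simp [dol_eq_insertIdx]

lemma getElem_dol_succAbove (w : List α) (k : Fin (w.length + 1)) (j : Fin w.length) :
    (dol w (k + 1))[(k.succAbove j : ℕ)]'(by
      rw [length_dol w (by omega)]; exact (k.succAbove j).isLt) = (w[(j : ℕ)] : WithBot α) := by
  simp only [dol_eq_insertIdx, Nat.add_sub_cancel, List.getElem_insertIdx]
  rcases lt_or_ge j.castSucc k with h | h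
  · have hjk : (j : ℕ) < k := h
    simp [Fin.succAbove_of_castSucc_lt _ _ h, hjk]
  · have hkj : (k : ℕ) ≤ j := h
    simp [Fin.succAbove_of_le_castSucc _ _ h, show ¬(j : ℕ) + 1 < k by omega,
      show (j : ℕ) + 1 ≠ k by omega]

lemma IsStdPerm.dol {w : List α} {σ : Equiv.Perm (Fin w.length)} (hσ : IsStdPerm w σ)
    (k : Fin (w.length + 1)) :
    IsStdPerm (dol w (k + 1)) (Equiv.Perm.decomposeFin.symm (0, σ) * k.cycleRange) := by
  obtain ⟨_, hσ⟩ := hσ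
  refine ⟨length_dol w (by omega), fun x y => ?_⟩
  simp only [List.get_eq_getElem, Fin.val_cast, Equiv.Perm.mul_apply]
  induction x using Fin.succAboveCases k <;> induction y using Fin.succAboveCases k <;>
    simp [getElem_dol_self, getElem_dol_succAbove, Fin.cycleRange_self, Fin.cycleRange_succAbove,
      hσ]

end Dol

theorem statement_12_general {α : Type*} [LinearOrder α] (w : List α)
    (σ : Equiv.Perm (Fin w.length)) (hσ : IsStdPerm w σ)
    (i : ℕ) (h1 : 1 ≤ i) (h2 : i ≤ w.length + 1)
    (σi : Equiv.Perm (Fin (w.length + 1))) (hσi : IsStdPerm (dol w i) σi) :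
    (Equiv.Perm.sign σi : ℤ) = (-1) ^ (w.length - numCycles σ + i - 1) := by
  obtain ⟨k, rfl⟩ : ∃ k : Fin (w.length + 1), i = k + 1 := ⟨⟨i - 1, by omega⟩, by simp; omega⟩
  have hexp : w.length - numCycles σ + (k + 1) - 1 = w.length - numCycles σ + k := by omega
  rw [hσi.eq (hσ.dol k), map_mul, Equiv.Perm.decomposeFin.symm_sign, if_pos rfl, one_mul,
    sign_eq_neg_one_pow_card_sub_numCycles, Fintype.card_fin, Fin.sign_cycleRange, hexp, pow_add]
  push_cast
  rfl

/-- For every `1 ≤ i ≤ n+1`, `sgn(σ_i) = (−1)^{n−c+i−1}`, where `c` is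
the number of cycles of `σ_w`. -/
theorem statement_12 {α : Type*} [LinearOrder α] [Fintype α] (w : List α)
    (σ : Equiv.Perm (Fin w.length)) (hσ : IsStdPerm w σ)
    (i : ℕ) (h1 : 1 ≤ i) (h2 : i ≤ w.length + 1)
    (σi : Equiv.Perm (Fin (w.length + 1))) (hσi : IsStdPerm (dol w i) σi) :
    (Equiv.Perm.sign σi : ℤ) = (-1) ^ (w.length - numCycles σ + i - 1) :=
  statement_12_general w σ hσ i h1 h2 σi hσi

end DollarBWT
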